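/- Let V be a vector space over ℂ and h a hermitian form on V. Let r_1, …, r_l ∈ V satisfy h(r_i, r_i) = 1 for all i and h(r_i, r_j) = 0 for all i ≠ j, and let ζ_1, …, ζ_l ∈ ℂ with ζ_i ≠ 1 for each i. Let φ = h_{r_1}^{ζ_1} ∘ ⋯ ∘ h_{r_l}^{ζ_l}. Suppose y ∈ V satisfies h(y,y) = c for some real number c < 0, and φ(y) = λ·y for some λ ∈ ℂ. Then λ = 1 and h(y, r_i) = 0 for every i = 1, …, l. -/

import Mathlib

/-
Orthogonality of the `r i` makes the reflections act independently:
`φ y = y - S` with `S = ∑ (1 - ζ i) h(y, r i) • r i`. If `φ y = λ y` then `S = (1 - λ) y`, so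
`h(S, S)` is both `|1 - λ|² c ≤ 0` and, by orthonormality, `∑ |(1 - ζ i) h(y, r i)|² ≥ 0`.
Hence both vanish, and `ζ i ≠ 1` gives `h(y, r i) = 0`.
-/

/-- The ζ-reflection in `r`: `x ↦ x − (1 − ζ)·h(x,r)·r`. -/
def zetaReflection {V : Type*} [AddCommGroup V] [Module ℂ V]
    (h : V → V → ℂ) (r : V) (ζ : ℂ) : V → V :=
  fun x => x - ((1 - ζ) * h x r) • r

section HermitianForm

variable {V : Type*} [AddCommGroup V] [Module ℂ V] {h : V → V → ℂ}

def leftLinearMap (h_add : ∀ x y z : V, h (x + y) z = h x z + h y z)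
    (h_smul : ∀ (c : ℂ) (x y : V), h (c • x) y = c * h x y) (z : V) : V →ₗ[ℂ] ℂ :=
  IsLinearMap.mk' (h · z) ⟨fun x y => h_add x y z, fun c x => h_smul c x z⟩

theorem apply_sub_left (h_add : ∀ x y z : V, h (x + y) z = h x z + h y z)
    (h_smul : ∀ (c : ℂ) (x y : V), h (c • x) y = c * h x y)
    (x y z : V) : h (x - y) z = h x z - h y z :=
  map_sub (leftLinearMap h_add h_smul z) x y

theorem apply_sum_left (h_add : ∀ x y z : V, h (x + y) z = h x z + h y z)
    (h_smul : ∀ (c : ℂ) (x y : V), h (c • x) y = c * h x y)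
    {ι : Type*} (s : Finset ι) (f : ι → V) (z : V) :
    h (∑ i ∈ s, f i) z = ∑ i ∈ s, h (f i) z :=
  map_sum (leftLinearMap h_add h_smul z) f s

theorem apply_sum_smul_of_orthonormal (h_add : ∀ x y z : V, h (x + y) z = h x z + h y z)
    (h_smul : ∀ (c : ℂ) (x y : V), h (c • x) y = c * h x y)
    {ι : Type*} [Fintype ι] {r : ι → V}
    (hrr : ∀ i, h (r i) (r i) = 1) (horth : ∀ i i', i ≠ i' → h (r i) (r i') = 0)
    (b : ι → ℂ) (i : ι) : h (∑ j, b j • r j) (r i) = b i := by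
  rw [apply_sum_left h_add h_smul, Finset.sum_eq_single i]
  · rw [h_smul, hrr, mul_one]
  · intro j _ hji
    rw [h_smul, horth j i hji, mul_zero]
  · exact fun hi => absurd (Finset.mem_univ i) hi

theorem apply_self_sum_smul_of_orthonormal (h_add : ∀ x y z : V, h (x + y) z = h x z + h y z)
    (h_smul : ∀ (c : ℂ) (x y : V), h (c • x) y = c * h x y)
    (h_conj : ∀ x y : V, h y x = starRingEnd ℂ (h x y))
    {ι : Type*} [Fintype ι] {r : ι → V}
    (hrr : ∀ i, h (r i) (r i) = 1) (horth : ∀ i i', i ≠ i' → h (r i) (r i') = 0)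
    (b : ι → ℂ) : h (∑ j, b j • r j) (∑ j, b j • r j) = ∑ j, (Complex.normSq (b j) : ℂ) := by
  conv_lhs => rw [apply_sum_left h_add h_smul]
  refine Finset.sum_congr rfl fun j _ => ?_
  rw [h_smul, h_conj, apply_sum_smul_of_orthonormal h_add h_smul hrr horth, Complex.mul_conj]

theorem apply_smul_self_smul (h_smul : ∀ (c : ℂ) (x y : V), h (c • x) y = c * h x y)
    (h_conj : ∀ x y : V, h y x = starRingEnd ℂ (h x y))
    (a : ℂ) (y : V) (c : ℝ) (hyy : h y y = c) : h (a • y) (a • y) = (Complex.normSq a * c : ℝ) := by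
  rw [h_smul, h_conj, h_smul, hyy, map_mul, Complex.conj_ofReal, ← mul_assoc, Complex.mul_conj]
  push_cast
  ring

theorem foldr_zetaReflection_apply (h_add : ∀ x y z : V, h (x + y) z = h x z + h y z)
    (h_smul : ∀ (c : ℂ) (x y : V), h (c • x) y = c * h x y)
    {l : ℕ} (r : Fin l → V) (ζ : Fin l → ℂ)
    (horth : ∀ i i', i ≠ i' → h (r i) (r i') = 0) (y : V) :
    (List.ofFn fun i => zetaReflection h (r i) (ζ i)).foldr (· ∘ ·) id y =
      y - ∑ i, ((1 - ζ i) * h y (r i)) • r i := by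
  induction l with
  | zero => simp
  | succ n ih =>
    have horth_succ : ∀ i i' : Fin n, i ≠ i' → h (r i.succ) (r i'.succ) = 0 :=
      fun i i' hne => horth _ _ (Fin.succ_injective n |>.ne hne)
    have htail_orth : h (∑ i : Fin n, ((1 - ζ i.succ) * h y (r i.succ)) • r i.succ) (r 0) = 0 := by
      rw [apply_sum_left h_add h_smul]
      exact Finset.sum_eq_zero fun i _ => by rw [h_smul, horth _ _ (Fin.succ_ne_zero i), mul_zero]
    rw [List.ofFn_succ, List.foldr_cons, Function.comp_apply,
      ih (fun i => r i.succ) (fun i => ζ i.succ) horth_succ, zetaReflection,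
      apply_sub_left h_add h_smul, htail_orth, sub_zero, Fin.sum_univ_succ]
    abel

end HermitianForm

/-- Let `h` be a hermitian form on a complex vector space `V`, `r_1, …, r_l` mutually
orthogonal vectors of norm one, `ζ_1, …, ζ_l ∈ ℂ` all `≠ 1`, and
`φ = h_{r_1}^{ζ_1} ∘ ⋯ ∘ h_{r_l}^{ζ_l}`. If `y ∈ V` has `h(y,y) = c` for a real `c < 0`
and `φ(y) = λ·y` for some `λ ∈ ℂ`, then `λ = 1` and `h(y, r_i) = 0` for every `i`. -/
theorem product_of_reflections_negative_eigenvector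
    {V : Type*} [AddCommGroup V] [Module ℂ V]
    (h : V → V → ℂ)
    (h_add : ∀ x y z : V, h (x + y) z = h x z + h y z)
    (h_smul : ∀ (c : ℂ) (x y : V), h (c • x) y = c * h x y)
    (h_conj : ∀ x y : V, h y x = (starRingEnd ℂ) (h x y))
    (l : ℕ) (r : Fin l → V)
    (hrr : ∀ i, h (r i) (r i) = 1)
    (horth : ∀ i i' : Fin l, i ≠ i' → h (r i) (r i') = 0)
    (ζ : Fin l → ℂ) (hζ : ∀ i, ζ i ≠ 1)
    (y : V) (c : ℝ) (hc : c < 0) (hyy : h y y = (c : ℂ))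
    (lam : ℂ)
    (heig : ((List.ofFn fun i : Fin l => zetaReflection h (r i) (ζ i)).foldr
        (· ∘ ·) id) y = lam • y) :
    lam = 1 ∧ ∀ i : Fin l, h y (r i) = 0 := by
  set b : Fin l → ℂ := fun i => (1 - ζ i) * h y (r i)
  have hS : ∑ i, b i • r i = (1 - lam) • y := by
    rw [sub_smul, one_smul, ← heig, foldr_zetaReflection_apply h_add h_smul r ζ horth y]
    abel
  have hnorm : Complex.normSq (1 - lam) * c = ∑ i, Complex.normSq (b i) := by
    have := apply_self_sum_smul_of_orthonormal h_add h_smul h_conj hrr horth b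
    rw [hS, apply_smul_self_smul h_smul h_conj _ y c hyy] at this
    exact_mod_cast this
  have hsum_nonneg : 0 ≤ ∑ i, Complex.normSq (b i) :=
    Finset.sum_nonneg fun i _ => Complex.normSq_nonneg _
  have hlam : Complex.normSq (1 - lam) = 0 := by
    nlinarith [Complex.normSq_nonneg (1 - lam)]
  have hb : ∀ i, Complex.normSq (b i) = 0 :=
    fun i => (Finset.sum_eq_zero_iff_of_nonneg fun j _ => Complex.normSq_nonneg (b j)).mp
      (by rw [← hnorm, hlam, zero_mul]) i (Finset.mem_univ i)
  refine ⟨(sub_eq_zero.mp (Complex.normSq_eq_zero.mp hlam)).symm, fun i => ?_⟩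
  have hζi : 1 - ζ i ≠ 0 := sub_ne_zero.mpr (hζ i).symm
  exact (mul_eq_zero.mp (Complex.normSq_eq_zero.mp (hb i))).resolve_left hζi
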